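/- arXiv:2501.16478 — 4 statements merged into one kernel-verified Lean document; each statement's English description precedes it below -/
import Mathlib

section
/- For all s ≥ 0, t_{2s+1}(x) + 2 = (x + 2)·(c_s(x) - c_{s-1}(x))², as polynomials over ℤ. -/
/-!
Under `X = u + u⁻¹` the polynomials `t` and `c` are Mathlib's Vieta–Lucas and Vieta–Fibonacci
polynomials: `t n = C n = uⁿ + u⁻ⁿ` and `c (n + 1) = S n`, where `(u - u⁻¹) S n = uⁿ⁺¹ - u⁻ⁿ⁻¹`.
With `v² = u`, both sides of the identity equal `(v²ˢ⁺¹ + v⁻²ˢ⁻¹)²`. Algebraically, the product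
formula `C m * C (m + 1) = C (2m + 1) + X` and the Cassini identity
`S (m - 1)² + S m² - X S (m - 1) S m = 1` combine to give it.
-/

open Polynomial

/-- `c n` is the paper's `c_{n-1}`, so `c 0 = c_{-1} = 0`. -/
noncomputable def c : ℕ → Polynomial ℤ
  | 0 => 0
  | 1 => 1
  | (n + 2) => X * c (n + 1) - c n

noncomputable def t : ℕ → Polynomial ℤ
  | 0 => 2
  | 1 => X
  | (n + 2) => X * t (n + 1) - t n

namespace Polynomial.Chebyshev

variable (R : Type*) [CommRing R]

theorem S_sub_one_sq_add_S_sq (n : ℤ) :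
    S R (n - 1) ^ 2 + S R n ^ 2 - X * S R (n - 1) * S R n = 1 := by
  simpa using S_sq_add_S_sq R (n - 1)

theorem C_two_mul_add_one (n : ℤ) : C R (2 * n + 1) = X + (X ^ 2 - 4) * S R n * S R (n - 1) := by
  have hprod : C R n * C R (n + 1) = C R (2 * n + 1) + X := by
    have h := C_mul_C R n (n + 1)
    rwa [show n + (n + 1) = 2 * n + 1 by ring, show n - (n + 1) = -1 by ring, C_neg_one] at h
  have hCn := C_eq_S_sub_X_mul_S R n
  have hCn1 : C R (n + 1) = 2 * S R (n + 1) - X * S R n := by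
    simpa using C_eq_S_sub_X_mul_S R (n + 1)
  linear_combination -hprod + C R (n + 1) * hCn + (2 * S R n - X * S R (n - 1)) * hCn1
    + 2 * X * S_sub_one_sq_add_S_sq R n + 2 * (2 * S R n - X * S R (n - 1)) * S_add_one R n

theorem C_two_mul_add_one_add_two (n : ℤ) :
    C R (2 * n + 1) + 2 = (X + 2) * (S R n - S R (n - 1)) ^ 2 := by
  linear_combination C_two_mul_add_one R n - (X + 2) * S_sub_one_sq_add_S_sq R n

end Polynomial.Chebyshev

theorem t_eq_chebyshev_C (n : ℕ) : t n = Chebyshev.C ℤ n := by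
  induction n using Nat.twoStepInduction with
  | zero => simp [t]
  | one => simp [t]
  | more n ih₀ ih₁ =>
    rw [t, ih₀, ih₁]
    push_cast
    exact (Chebyshev.C_add_two ℤ n).symm

theorem c_eq_chebyshev_S (n : ℕ) : c n = Chebyshev.S ℤ (n - 1) := by
  induction n using Nat.twoStepInduction with
  | zero => simp [c]
  | one => simp [c]
  | more n ih₀ ih₁ =>
    rw [c, ih₀, ih₁]
    simpa [add_sub_assoc] using (Chebyshev.S_add_one ℤ n).symm

theorem stmt_2 (s : ℕ) :
    t (2 * s + 1) + 2 = (X + 2) * (c (s + 1) - c s) ^ 2 := by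
  rw [t_eq_chebyshev_C, c_eq_chebyshev_S, c_eq_chebyshev_S]
  push_cast
  simpa using Chebyshev.C_two_mul_add_one_add_two ℤ s
end

section
/- For all s ≥ 0, t_{2s+1}(x) - 2 = (x - 2)·(c_s(x) + c_{s-1}(x))², as polynomials over ℤ. -/
/-!
Write `C` and `S` for the Vieta–Lucas and Vieta–Fibonacci polynomials (Mathlib's rescaled
Chebyshev polynomials), so that `t n = C n` and `c (n + 1) = S n`. The product formula
`C (k + 1) * C k = C (2k + 1) + X` together with `C n = 2 S n - X S (n - 1)` writes `C (2k + 1)`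
as a quadratic form in `a = S k` and `b = S (k - 1)`; its difference with `(X - 2) (a + b)² + 2`
is `(X + 2) (a² + b² - X a b - 1)`, which vanishes by the Cassini identity for `S`.
-/

open Polynomial

namespace Polynomial.Chebyshev

theorem C_two_mul_add_one_sub_two (R : Type*) [CommRing R] (k : ℤ) :
    C R (2 * k + 1) - 2 = (X - 2) * (S R k + S R (k - 1)) ^ 2 := by
  have hprod : C R (k + 1) * C R k = C R (2 * k + 1) + X := by
    rw [C_mul_C, ← C_one (R := R)]
    ring_nf
  have hC_succ : C R (k + 1) = 2 * S R (k + 1) - X * S R k := by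
    simpa using C_eq_S_sub_X_mul_S R (k + 1)
  have hcassini : S R (k - 1) ^ 2 + S R k ^ 2 - X * S R (k - 1) * S R k = 1 := by
    simpa using S_sq_add_S_sq R (k - 1)
  linear_combination (X + 2) * hcassini - hprod +
    (2 * S R k - X * S R (k - 1)) * hC_succ + C R (k + 1) * C_eq_S_sub_X_mul_S R k +
    2 * (2 * S R k - X * S R (k - 1)) * S_add_one R k

end Polynomial.Chebyshev

open Polynomial.Chebyshev

theorem t_eq_C (n : ℕ) : t n = C ℤ n := by
  induction n using Nat.twoStepInduction with
  | zero => simp [t]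
  | one => simp [t]
  | more n ih₀ ih₁ =>
    rw [t, ih₀, ih₁]
    push_cast
    exact (C_add_two ℤ n).symm

theorem c_eq_S (n : ℕ) : c n = S ℤ (n - 1) := by
  induction n using Nat.twoStepInduction with
  | zero => simp [c]
  | one => simp [c]
  | more n ih₀ ih₁ =>
    rw [c, ih₀, ih₁]
    push_cast
    rw [add_sub_cancel_right, show (n : ℤ) + 2 - 1 = n + 1 by ring]
    exact (S_add_one ℤ n).symm

theorem stmt_3 (s : ℕ) :
    t (2 * s + 1) - 2 = (X - 2) * (c (s + 1) + c s) ^ 2 := by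
  rw [t_eq_C, c_eq_S, c_eq_S]
  push_cast
  simpa using C_two_mul_add_one_sub_two ℤ s
end

section
/- The Chebyshev polynomial T_n of the first kind is irreducible over ℚ if and only if n is a power of 2. -/
/-!
If `n = 2 ^ a * m` with `m > 1` odd, then `T_n = T_m ∘ T_{2^a}`, and `T_m` is an odd polynomial,
so `X ∣ T_m` and `T_{2^a}` is a proper factor of `T_n`.

Conversely, `2 T_n(x) = C_n(2x)` for the monic integral Chebyshev polynomials `C_n`
(`C_n(x + x⁻¹) = xⁿ + x⁻ⁿ`), and `C_{2^(k+1)} = C_{2^k} ^ 2 - 2` is congruent to `X ^ 2^(k+1)`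
modulo 2 with constant term `±2`. Hence it is Eisenstein at 2, irreducible over `ℚ` by Gauss's
lemma, and so is `T_{2^(k+1)}`, which differs from it by an affine change of variable and a unit.
-/

open Polynomial

namespace Polynomial

theorem not_irreducible_comp_of_X_dvd {R : Type*} [CommRing R] [IsDomain R] {p q : R[X]}
    (hXp : X ∣ p) (hp : 2 ≤ p.natDegree) (hq : 0 < q.natDegree) : ¬Irreducible (p.comp q) := by
  obtain ⟨r, rfl⟩ := hXp
  have hr : r ≠ 0 := by rintro rfl; simp at hp
  have hr_pos : 0 < r.natDegree := by
    rw [natDegree_mul X_ne_zero hr, natDegree_X] at hp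
    omega
  rw [mul_comp, X_comp]
  intro h
  rcases h.isUnit_or_isUnit rfl with hu | hu
  · exact not_isUnit_of_natDegree_pos q hq hu
  · exact not_isUnit_of_natDegree_pos _ (by rw [natDegree_comp]; positivity) hu

theorem irreducible_comp_C_mul_X_add_C_iff {R : Type*} [CommRing R] (a b : R) [Invertible a]
    {p : R[X]} : Irreducible (p.comp (C a * X + C b)) ↔ Irreducible p := by
  rw [comp_eq_aeval, ← algEquivCMulXAddC_apply]
  exact MulEquiv.irreducible_iff _

namespace Chebyshev

variable (R : Type*) [CommRing R]

theorem C_two_mul (n : ℤ) : C R (2 * n) = C R n ^ 2 - 2 := by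
  rw [C_mul, C_two, sub_comp, pow_comp, X_comp, ofNat_comp]
  norm_cast

theorem degree_C_natCast_le (n : ℕ) : (C R n).degree ≤ n := by
  induction n using Nat.twoStepInduction with
  | zero => simpa using degree_le_of_natDegree_le (natDegree_ofNat (R := R) 2).le
  | one => simpa using degree_X_le
  | more n ih₀ ih₁ =>
    push_cast
    rw [C_add_two]
    refine (degree_sub_le _ _).trans (max_le ((degree_mul_le _ _).trans ?_) (ih₀.trans ?_))
    · push_cast at ih₁
      calc degree X + (C R (n + 1)).degree ≤ 1 + ((n + 1 : ℕ) : WithBot ℕ) :=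
            add_le_add degree_X_le (by exact_mod_cast ih₁)
        _ = ((n + 2 : ℕ) : WithBot ℕ) := by norm_cast; omega
    · exact_mod_cast (by omega : n ≤ n + 2)

theorem monic_C_natCast_and_natDegree [Nontrivial R] {n : ℕ} (hn : n ≠ 0) :
    (C R n).Monic ∧ (C R n).natDegree = n := by
  obtain ⟨n, rfl⟩ : ∃ m, n = m + 1 := ⟨n - 1, by omega⟩
  clear hn
  induction n with
  | zero => simp
  | succ n ih =>
    obtain ⟨hmonic, hdeg⟩ := ih
    have hXmonic : (X * C R (n + 1 : ℕ)).Monic := monic_X.mul hmonic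
    have hXdeg : (X * C R (n + 1 : ℕ)).natDegree = n + 2 := by
      rw [natDegree_X_mul hmonic.ne_zero, hdeg]
    have hlt : (C R n).degree < (X * C R (n + 1 : ℕ)).degree := by
      rw [degree_eq_natDegree hXmonic.ne_zero, hXdeg]
      exact (degree_C_natCast_le R n).trans_lt (by exact_mod_cast (by omega : n < n + 2))
    have hrec : C R (n + 1 + 1 : ℕ) = X * C R (n + 1 : ℕ) - C R n := by
      push_cast
      exact C_add_two R n
    rw [hrec]
    exact ⟨hXmonic.sub_of_left hlt,
      (natDegree_eq_of_degree_eq (degree_sub_eq_left_of_degree_lt hlt)).trans hXdeg⟩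

theorem C_two_pow_of_two_eq_zero (h : (2 : R) = 0) (k : ℕ) : C R (2 ^ k) = X ^ 2 ^ k := by
  induction k with
  | zero => simp
  | succ k ih =>
    rw [pow_succ', C_two_mul, ih, ← map_ofNat Polynomial.C, h, map_zero, sub_zero, ← pow_mul,
      pow_succ]

theorem C_eval_zero (n : ℤ) : (C R n).eval 0 = 2 * (T R n).eval 0 := by
  simpa using congr_arg (eval 0) (C_comp_two_mul_X R n)

theorem C_eval_zero_two_mul (n : ℤ) : (C R (2 * n)).eval 0 = 2 * n.negOnePow := by
  rw [C_eval_zero, T_eval_two_mul_zero]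

theorem irreducible_C_int_two_pow_succ (k : ℕ) : Irreducible (C ℤ (2 ^ (k + 1))) := by
  have hk : (2 ^ (k + 1) : ℕ) ≠ 0 := by positivity
  obtain ⟨hmonic, hdeg⟩ := monic_C_natCast_and_natDegree ℤ hk
  push_cast at hmonic hdeg
  have hP : (Ideal.span {(2 : ℤ)}).IsPrime :=
    (Ideal.span_singleton_prime two_ne_zero).mpr Int.prime_two
  have hmod2 : (C ℤ (2 ^ (k + 1))).map (Int.castRingHom (ZMod 2)) = X ^ 2 ^ (k + 1) := by
    rw [map_C]
    exact C_two_pow_of_two_eq_zero (ZMod 2) rfl (k + 1)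
  refine (hmonic.isEisensteinAt_of_mem_of_notMem hP.ne_top ?_ ?_).irreducible hP
    hmonic.isPrimitive (by omega)
  · intro i hi
    have hcoeff := congr_arg (coeff · i) hmod2
    simp only [coeff_map, coeff_X_pow, eq_intCast, if_neg (by omega : i ≠ 2 ^ (k + 1))] at hcoeff
    exact Ideal.mem_span_singleton.mpr ((ZMod.intCast_zmod_eq_zero_iff_dvd _ 2).mp hcoeff)
  · rw [coeff_zero_eq_eval_zero, pow_succ' (2 : ℤ), C_eval_zero_two_mul, Ideal.span_singleton_pow,
      Ideal.mem_span_singleton]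
    rcases Int.units_eq_one_or (2 ^ k : ℤ).negOnePow with h | h <;> simp [h]

theorem irreducible_T_rat_two_pow (k : ℕ) : Irreducible (T ℚ (2 ^ k)) := by
  cases k with
  | zero => simp [irreducible_X]
  | succ k =>
    have hC : Irreducible (C ℚ (2 ^ (k + 1))) := by
      rw [← map_C (algebraMap ℤ ℚ)]
      exact (monic_C_natCast_and_natDegree ℤ (n := 2 ^ (k + 1)) (by positivity)).1
        |>.irreducible_iff_irreducible_map_fraction_map.mp (irreducible_C_int_two_pow_succ k)
    rw [T_eq_half_mul_C_comp_two_mul_X,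
      irreducible_isUnit_mul (isUnit_C.mpr (isUnit_of_invertible _))]
    have h := (irreducible_comp_C_mul_X_add_C_iff (2 : ℚ) 0).mpr hC
    rwa [map_ofNat, map_zero, add_zero] at h

theorem not_irreducible_T_of_ne_two_pow {R : Type*} [CommRing R] [IsDomain R] [NeZero (2 : R)]
    {n : ℕ} (hn : ∀ k, n ≠ 2 ^ k) : ¬Irreducible (T R n) := by
  rcases eq_or_ne n 0 with rfl | hn0
  · simp
  obtain ⟨a, m, hm, rfl⟩ := Nat.exists_eq_two_pow_mul_odd hn0
  have hm3 : 3 ≤ m := by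
    obtain ⟨j, rfl⟩ := hm
    rcases j with _ | j
    · exact absurd (mul_one _) (hn a)
    · omega
  have hXdvd : X ∣ T R m := by
    rw [X_dvd_iff, coeff_zero_eq_eval_zero, T_eval_zero_of_odd]
    exact_mod_cast hm
  rw [mul_comm, Nat.cast_mul, T_mul]
  exact not_irreducible_comp_of_X_dvd hXdvd (by rw [natDegree_T, Int.natAbs_natCast]; omega)
    (by rw [natDegree_T]; positivity)

end Chebyshev
end Polynomial

theorem stmt_17 (n : ℕ) :
    Irreducible (Polynomial.Chebyshev.T ℚ n) ↔ ∃ k : ℕ, n = 2 ^ k := by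
  constructor
  · intro h
    by_contra! hn
    exact Chebyshev.not_irreducible_T_of_ne_two_pow hn h
  · rintro ⟨k, rfl⟩
    exact_mod_cast Chebyshev.irreducible_T_rat_two_pow k
end

section
/- For odd n = 2s+1 ≥ 3, the polynomial c_s(x) - c_{s-1}(x) equals the product over divisors d of n with d < n of the minimal polynomial over ℚ of 2·cos(π·d/n); equivalently, ∏_{k=1}^{s}(x - 2cos((2k-1)π/n)) = ∏_{d | n, d < n} ψ_{2n/d}(x), where ψ_m denotes the minimal polynomial of 2cos(2π/m). -/
/-!
Since `sin θ * c k (2 cos θ) = sin (k θ)`, the polynomial `c (s + 1) - c s` is monic of degree `s`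
and vanishes at the `s` distinct numbers `2 cos ((2k + 1) π / n)`, `k < s`. For a root of unity `ζ`,
the conjugates of `ζ + ζ⁻¹` over `ℚ` are the `η + η⁻¹` with `η` of the same order, so
`2 cos (a π / n)` and `2 cos (b π / n)` have the same minimal polynomial iff
`gcd (2n) a = gcd (2n) b`. For odd `a` this gcd is the proper divisor `gcd n a` of `n`: the roots
are sorted by the minimal polynomials of `2 cos (d π / n)`, `d` a proper divisor of `n`, which are
pairwise distinct.
-/

open Polynomial Real IntermediateField

theorem add_inv_eq_add_inv_iff {K : Type*} [Field K] {a b : K} (ha : a ≠ 0) (hb : b ≠ 0) :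
    a + a⁻¹ = b + b⁻¹ ↔ a = b ∨ a = b⁻¹ := by
  have key : a + a⁻¹ - (b + b⁻¹) = (a - b) * (a - b⁻¹) / a := by
    field_simp; ring
  rw [← sub_eq_zero, key, div_eq_zero_iff, mul_eq_zero, sub_eq_zero, sub_eq_zero, or_iff_left ha]

theorem Polynomial.prod_X_sub_C_dvd_of_isRoot {K ι : Type*} [Field K] {p : K[X]} {S : Finset ι}
    {f : ι → K} (hf : Set.InjOn f S) (hroot : ∀ i ∈ S, p.IsRoot (f i)) :
    ∏ i ∈ S, (X - C (f i)) ∣ p :=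
  Finset.prod_dvd_of_coprime
    (fun _ hi _ hj hij ↦ isCoprime_X_sub_C_of_isUnit_sub (sub_ne_zero.2 (hf.ne hi hj hij)).isUnit)
    fun i hi ↦ dvd_iff_isRoot.2 (hroot i hi)

theorem minpoly.isCoprime_of_ne {K L : Type*} [Field K] [Field L] [Algebra K L] {x y : L}
    (hx : IsIntegral K x) (hy : IsIntegral K y) (hxy : minpoly K x ≠ minpoly K y) :
    IsCoprime (minpoly K x) (minpoly K y) :=
  (minpoly.irreducible hx).coprime_iff_not_dvd.2 fun hdvd ↦ hxy <|
    eq_of_monic_of_associated (minpoly.monic hx) (minpoly.monic hy)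
      ((minpoly.irreducible hx).associated_of_dvd (minpoly.irreducible hy) hdvd)

theorem Nat.filter_divisors_lt_eq_properDivisors (n : ℕ) :
    n.divisors.filter (· < n) = n.properDivisors := by
  ext d
  simp only [Finset.mem_filter, Nat.mem_divisors, Nat.mem_properDivisors]
  exact ⟨fun ⟨⟨hdn, _⟩, hd⟩ ↦ ⟨hdn, hd⟩, fun ⟨hdn, hd⟩ ↦ ⟨⟨hdn, by omega⟩, hd⟩⟩

theorem c_add_two (k : ℕ) : c (k + 2) = X * c (k + 1) - c k := rfl

theorem c_eq_S_s18 (k : ℕ) : c k = Chebyshev.S ℤ ((k : ℤ) - 1) := by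
  induction k using Nat.twoStepInduction with
  | zero => simp [c]
  | one => simp [c]
  | more k ih₀ ih₁ =>
    rw [c_add_two, ih₀, ih₁]
    push_cast
    rw [add_sub_cancel_right, show (k : ℤ) + 2 - 1 = k + 1 by ring, Chebyshev.S_add_one]

theorem sin_mul_aeval_two_cos_c (θ : ℝ) (k : ℕ) :
    sin θ * aeval (2 * cos θ) (c k) = sin (k * θ) := by
  rw [c_eq_S_s18, aeval_def, eval₂_eq_eval_map, Chebyshev.map_S, mul_comm,
    Chebyshev.S_two_mul_real_cos]
  push_cast
  ring_nf

theorem degree_c_succ : ∀ k : ℕ, (c (k + 1)).degree = k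
  | 0 => by simp [c]
  | 1 => by simp [c]
  | k + 2 => by
    have hX : (X * c (k + 2)).degree = ↑(k + 2) := by
      rw [degree_mul, degree_X, degree_c_succ (k + 1)]
      norm_cast
      omega
    have hlt : (c (k + 1)).degree < (X * c (k + 2)).degree := by
      rw [hX, degree_c_succ k]
      exact_mod_cast (by omega : k < k + 2)
    rw [c_add_two, degree_sub_eq_left_of_degree_lt hlt, hX]

theorem degree_c_lt_degree_c_succ (k : ℕ) : (c k).degree < (c (k + 1)).degree := by
  cases k with
  | zero => simp [c]
  | succ k =>
    rw [degree_c_succ, degree_c_succ]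
    exact_mod_cast k.lt_succ_self

theorem monic_c_succ : ∀ k : ℕ, (c (k + 1)).Monic
  | 0 => monic_one
  | 1 => by simp [c]
  | k + 2 => by
    rw [c_add_two]
    refine (monic_X.mul (monic_c_succ (k + 1))).sub_of_left ?_
    rw [degree_mul, degree_X, degree_c_succ, degree_c_succ]
    norm_cast
    omega

theorem monic_c_succ_sub_c (s : ℕ) : (c (s + 1) - c s).Monic :=
  (monic_c_succ s).sub_of_left (degree_c_lt_degree_c_succ s)

theorem natDegree_c_succ_sub_c (s : ℕ) : (c (s + 1) - c s).natDegree = s :=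
  natDegree_eq_of_degree_eq_some
    ((degree_sub_eq_left_of_degree_lt (degree_c_lt_degree_c_succ s)).trans (degree_c_succ s))

theorem IsPrimitiveRoot.rootSet_minpoly_add_inv {k : ℕ} (hk : 0 < k) {ζ : ℂ}
    (hζ : IsPrimitiveRoot ζ k) :
    (minpoly ℚ (ζ + ζ⁻¹)).rootSet ℂ = (fun η ↦ η + η⁻¹) '' {η | IsPrimitiveRoot η k} := by
  have := adjoin.finiteDimensional ((hζ.isIntegral hk).tower_top (A := ℚ))
  have hminpoly : minpoly ℚ (AdjoinSimple.gen ℚ ζ + (AdjoinSimple.gen ℚ ζ)⁻¹) =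
      minpoly ℚ (ζ + ζ⁻¹) := by
    rw [← minpoly.algebraMap_eq (algebraMap ℚ⟮ζ⟯ ℂ).injective, map_add, map_inv₀,
      AdjoinSimple.algebraMap_gen]
  have hprim : {η : ℂ | IsPrimitiveRoot η k} =
      Set.range fun σ : ℚ⟮ζ⟯ →ₐ[ℚ] ℂ ↦ σ (AdjoinSimple.gen ℚ ζ) := by
    rw [Algebra.IsAlgebraic.range_eval_eq_rootSet_minpoly,
      ← minpoly.algebraMap_eq (algebraMap ℚ⟮ζ⟯ ℂ).injective, AdjoinSimple.algebraMap_gen,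
      ← cyclotomic_eq_minpoly_rat hζ hk]
    ext η
    rw [Set.mem_ofPred_eq, mem_rootSet_of_ne (cyclotomic_ne_zero k ℚ), aeval_def,
      eval₂_eq_eval_map, map_cyclotomic, ← IsRoot.def, isRoot_cyclotomic_iff_charZero hk]
  rw [← hminpoly, ← Algebra.IsAlgebraic.range_eval_eq_rootSet_minpoly, hprim, ← Set.range_comp]
  simp only [Function.comp_def, map_add, map_inv₀]

-- `hη` rules out `η = 0`, where the junk value `0⁻¹ = 0` gives `η + η⁻¹ = 0 = I + I⁻¹`.
theorem minpoly_add_inv_eq_iff_orderOf_eq {ζ η : ℂ} (hζ : IsOfFinOrder ζ) (hη : η ≠ 0) :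
    minpoly ℚ (ζ + ζ⁻¹) = minpoly ℚ (η + η⁻¹) ↔ orderOf ζ = orderOf η := by
  have hk := hζ.orderOf_pos
  have hζk := IsPrimitiveRoot.orderOf ζ
  have hint : IsIntegral ℚ (ζ + ζ⁻¹) :=
    ((hζk.isIntegral hk).add (hζk.inv.isIntegral hk)).tower_top
  have hroots := hζk.rootSet_minpoly_add_inv hk
  constructor
  · intro h
    have hroot : η + η⁻¹ ∈ (minpoly ℚ (ζ + ζ⁻¹)).rootSet ℂ := by
      rw [mem_rootSet_of_ne (minpoly.ne_zero hint), h]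
      exact minpoly.aeval ℚ _
    obtain ⟨ξ, hξ, hξη⟩ := hroots ▸ hroot
    rcases (add_inv_eq_add_inv_iff (hξ.ne_zero hk.ne') hη).1 hξη with rfl | rfl
    · exact hξ.eq_orderOf
    · simpa using hξ.inv.eq_orderOf
  · intro h
    have hmem : η + η⁻¹ ∈ (minpoly ℚ (ζ + ζ⁻¹)).rootSet ℂ :=
      hroots ▸ ⟨η, h ▸ IsPrimitiveRoot.orderOf η, rfl⟩
    exact minpoly.eq_of_irreducible_of_monic (minpoly.irreducible hint)
      ((mem_rootSet_of_ne (minpoly.ne_zero hint)).1 hmem) (minpoly.monic hint)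

theorem minpoly_two_cos_pi_mul_div_eq_iff {n : ℕ} (hn : n ≠ 0) (a b : ℕ) :
    minpoly ℚ (2 * cos (π * a / n)) = minpoly ℚ (2 * cos (π * b / n)) ↔
      (2 * n).gcd a = (2 * n).gcd b := by
  have h2n : 2 * n ≠ 0 := by positivity
  set ζ := Complex.exp (2 * π * Complex.I / (2 * n : ℕ))
  have hζ : IsPrimitiveRoot ζ (2 * n) := Complex.isPrimitiveRoot_exp _ h2n
  have hfin := hζ.isOfFinOrder h2n
  have hcos (a : ℕ) : minpoly ℚ (2 * cos (π * a / n)) = minpoly ℚ (ζ ^ a + (ζ ^ a)⁻¹) := by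
    rw [← minpoly.algebraMap_eq (algebraMap ℝ ℂ).injective, ← Complex.exp_nat_mul,
      ← Complex.exp_neg, Complex.coe_algebraMap]
    push_cast [Complex.two_cos]
    congr 3 <;> field_simp
  have horder (a : ℕ) : orderOf (ζ ^ a) = 2 * n / (2 * n).gcd a := by
    rw [hfin.orderOf_pow, ← hζ.eq_orderOf]
  rw [hcos, hcos, minpoly_add_inv_eq_iff_orderOf_eq hfin.pow (pow_ne_zero _ (hζ.ne_zero h2n)),
    horder, horder, Nat.div_eq_iff_eq_of_dvd_dvd h2n (Nat.gcd_dvd_left _ _) (Nat.gcd_dvd_left _ _)]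

theorem aeval_two_cos_pi_mul_div_c_succ_sub_c {n s a : ℕ} (h : n = 2 * s + 1) (ha : Odd a)
    (han : a < n) : aeval (2 * cos (π * a / n)) (c (s + 1) - c s) = 0 := by
  set θ := π * a / n with hθ
  have hn : (0 : ℝ) < n := by rw [h]; positivity
  have hsin : sin θ ≠ 0 := by
    refine (sin_pos_of_pos_of_lt_pi (by positivity [ha.pos]) ?_).ne'
    rw [hθ, div_lt_iff₀ hn, mul_lt_mul_iff_right₀ pi_pos]
    exact_mod_cast han
  have hsym : sin ((s + 1 : ℕ) * θ) = sin (s * θ) := by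
    have : ((s + 1 : ℕ) : ℝ) * θ = a * π - s * θ := by
      rw [hθ, h]; push_cast; field_simp; ring
    rw [this, sin_sub, sin_nat_mul_pi, cos_nat_mul_pi, ha.neg_one_pow]
    ring
  refine (mul_eq_zero.1 ?_).resolve_left hsin
  rw [map_sub, mul_sub, sin_mul_aeval_two_cos_c, sin_mul_aeval_two_cos_c, hsym, sub_self]

theorem injOn_two_cos_pi_mul_div {n : ℕ} (hn : n ≠ 0) :
    Set.InjOn (fun a : ℕ ↦ 2 * cos (π * a / n)) (Set.Iic n) := by
  have hn' : (0 : ℝ) < n := by positivity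
  have hmem {a : ℕ} (ha : a ≤ n) : π * a / n ∈ Set.Icc 0 π := by
    refine ⟨by positivity, ?_⟩
    rw [div_le_iff₀ hn', mul_le_mul_iff_right₀ pi_pos]
    exact_mod_cast ha
  intro a ha b hb hab
  have := injOn_cos (hmem ha) (hmem hb) (by simpa using hab)
  field_simp at this
  exact_mod_cast this

section OddDenominator

variable {n s : ℕ} (h : n = 2 * s + 1)
include h

theorem odd_of_mem_properDivisors {d : ℕ} (hd : d ∈ n.properDivisors) : Odd d :=
  Odd.of_dvd_nat ⟨s, h⟩ (Nat.mem_properDivisors.1 hd).1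

theorem isIntegral_two_cos_pi_mul_div {d : ℕ} (hd : d ∈ n.properDivisors) :
    IsIntegral ℚ (2 * cos (π * d / n)) :=
  IsIntegral.tower_top (R := ℤ) ⟨_, monic_c_succ_sub_c s, aeval_two_cos_pi_mul_div_c_succ_sub_c h
    (odd_of_mem_properDivisors h hd) (Nat.mem_properDivisors.1 hd).2⟩

theorem prod_minpoly_dvd_map_c_succ_sub_c :
    ∏ d ∈ n.properDivisors, minpoly ℚ (2 * cos (π * d / n)) ∣
      (c (s + 1) - c s).map (Int.castRingHom ℚ) := by
  have hgcd {d : ℕ} (hd : d ∈ n.properDivisors) : (2 * n).gcd d = d :=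
    Nat.gcd_eq_right ((Nat.mem_properDivisors.1 hd).1.mul_left 2)
  refine Finset.prod_dvd_of_coprime (fun d hd e he hde ↦ minpoly.isCoprime_of_ne
    (isIntegral_two_cos_pi_mul_div h hd) (isIntegral_two_cos_pi_mul_div h he) ?_)
    fun d hd ↦ minpoly.dvd _ _ ?_
  · rwa [Ne, minpoly_two_cos_pi_mul_div_eq_iff (by omega), hgcd hd, hgcd he]
  · rw [← algebraMap_int_eq, aeval_map_algebraMap]
    exact aeval_two_cos_pi_mul_div_c_succ_sub_c h (odd_of_mem_properDivisors h hd)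
      (Nat.mem_properDivisors.1 hd).2

theorem injOn_two_cos_pi_mul_odd_div :
    Set.InjOn (fun k : ℕ ↦ 2 * cos (π * (2 * k + 1 : ℕ) / n)) (Finset.range s) :=
  (injOn_two_cos_pi_mul_div (by omega)).comp (fun _ _ _ _ h ↦ by simpa using h)
    fun k hk ↦ by simp at hk ⊢; omega

theorem map_c_succ_sub_c_eq_prod :
    (c (s + 1) - c s).map (algebraMap ℤ ℝ) =
      ∏ k ∈ Finset.range s, (X - C (2 * cos (π * (2 * k + 1 : ℕ) / n))) := by
  refine eq_of_monic_of_dvd_of_natDegree_le (monic_prod_of_monic _ _ fun _ _ ↦ monic_X_sub_C _)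
    ((monic_c_succ_sub_c s).map _)
    (prod_X_sub_C_dvd_of_isRoot (injOn_two_cos_pi_mul_odd_div h) fun k hk ↦ ?_) ?_
  · rw [IsRoot.def, eval_map_algebraMap]
    exact aeval_two_cos_pi_mul_div_c_succ_sub_c h (odd_two_mul_add_one k)
      (by simp at hk; omega)
  · rw [natDegree_finsetProd_X_sub_C_eq_card, (monic_c_succ_sub_c s).natDegree_map,
      natDegree_c_succ_sub_c, Finset.card_range]

theorem map_c_succ_sub_c_dvd_prod_minpoly :
    (c (s + 1) - c s).map (Int.castRingHom ℚ) ∣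
      ∏ d ∈ n.properDivisors, minpoly ℚ (2 * cos (π * d / n)) := by
  rw [← map_dvd_map' (algebraMap ℚ ℝ), Polynomial.map_map, ← algebraMap_int_eq,
    ← IsScalarTower.algebraMap_eq, map_c_succ_sub_c_eq_prod h]
  refine prod_X_sub_C_dvd_of_isRoot (injOn_two_cos_pi_mul_odd_div h) fun k hk ↦ ?_
  have hkn : 2 * k + 1 < n := by simp at hk; omega
  have hg : n.gcd (2 * k + 1) ∈ n.properDivisors := Nat.mem_properDivisors.2
    ⟨Nat.gcd_dvd_left _ _, (Nat.gcd_le_right _ (by omega)).trans_lt hkn⟩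
  have hminpoly : minpoly ℚ (2 * cos (π * (n.gcd (2 * k + 1) : ℕ) / n)) =
      minpoly ℚ (2 * cos (π * (2 * k + 1 : ℕ) / n)) := by
    rw [minpoly_two_cos_pi_mul_div_eq_iff (by omega),
      Nat.gcd_eq_right ((Nat.gcd_dvd_left _ _).mul_left 2),
      (Nat.coprime_two_left.2 (odd_two_mul_add_one k)).gcd_mul_left_cancel n]
  rw [IsRoot.def, eval_map_algebraMap, map_prod]
  exact Finset.prod_eq_zero hg (hminpoly ▸ minpoly.aeval ℚ _)

end OddDenominator

theorem stmt_18_general (n s : ℕ) (h : n = 2 * s + 1) :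
    (c (s + 1) - c s).map (Int.castRingHom ℚ) =
      ∏ d ∈ n.divisors.filter (· < n),
        minpoly ℚ (2 * Real.cos (π * d / n)) := by
  rw [Nat.filter_divisors_lt_eq_properDivisors]
  exact eq_of_monic_of_associated ((monic_c_succ_sub_c s).map _)
    (monic_prod_of_monic _ _ fun d hd ↦ minpoly.monic (isIntegral_two_cos_pi_mul_div h hd))
    (associated_of_dvd_dvd (map_c_succ_sub_c_dvd_prod_minpoly h)
      (prod_minpoly_dvd_map_c_succ_sub_c h))

theorem stmt_18 (n s : ℕ) (h : n = 2 * s + 1) (hn : 3 ≤ n) :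
    (c (s + 1) - c s).map (Int.castRingHom ℚ) =
      ∏ d ∈ n.divisors.filter (· < n),
        minpoly ℚ (2 * Real.cos (π * d / n)) :=
  stmt_18_general n s h
end
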